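/- Let t be a term over {d, e, +, ·} in which the constant e does not occur. Then dct(nf(t)) ≥ dct(t), where dct is the d-count (number of occurrences of d) and nf(t) is the unique normal form of t under the rewrite system R. -/

import Mathlib

/-- Ground terms over constants d, e with binary operations + (add) and · (app). -/
inductive Tm : Type
  | d : Tm
  | e : Tm
  | add : Tm → Tm → Tm
  | app : Tm → Tm → Tm
  deriving DecidableEq

open Tm

/-- Root rewrite steps: instances of the oriented rules. -/
inductive Root : Tm → Tm → Prop
  | addE (x) : Root (add x e) x
  | eAdd (x) : Root (add e x) x
  | assoc (x y z) : Root (add (add x y) z) (add x (add y z))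
  | appAdd (x y z) : Root (app (add x y) z) (app y (app x z))
  | appD (x y) : Root (app (app d x) y) (app x (add y x))
  | appE (x) : Root (app e x) x
  | dE : Root (app d e) e

/-- One rewrite step: a root step applied at some subterm position. -/
inductive Step : Tm → Tm → Prop
  | root {t u} : Root t u → Step t u
  | addL {t t' u} : Step t t' → Step (add t u) (add t' u)
  | addR {t u u'} : Step u u' → Step (add t u) (add t u')
  | appL {t t' u} : Step t t' → Step (app t u) (app t' u)
  | appR {t u u'} : Step u u' → Step (app t u) (app t u')

/-- Zero or more rewrite steps. -/
def Steps : Tm → Tm → Prop := Relation.ReflTransGen Step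

/-- A normal form is a term to which no rule applies. -/
def NormalForm (t : Tm) : Prop := ∀ u, ¬ Step t u

/-- Provable equality in the equational theory (reflexive symmetric transitive
congruence closure of the rule instances). -/
def TermEq : Tm → Tm → Prop := Relation.EqvGen Step

/-- The (reflexive) subterm relation. -/
inductive Subterm : Tm → Tm → Prop
  | refl (t) : Subterm t t
  | addL {s t u} : Subterm s t → Subterm s (add t u)
  | addR {s t u} : Subterm s u → Subterm s (add t u)
  | appL {s t u} : Subterm s t → Subterm s (app t u)
  | appR {s t u} : Subterm s u → Subterm s (app t u)

/-- The d-count: number of occurrences of d. -/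
def dct : Tm → ℕ
  | .d => 1
  | .e => 0
  | .add a b => dct a + dct b
  | .app a b => dct a + dct b

/-!
No rule creates an occurrence of `e`, so rewriting keeps a term `e`-free, and on `e`-free terms
no rule lowers the d-count: the rules for `e` never fire, `+`-associativity and
`(x+y)·z → y·(x·z)` only rearrange, and `(d·x)·y → x·(y+x)` loses one `d` but duplicates `x`,
which contains a `d` because it is `e`-free.
-/

theorem one_le_dct_of_not_subterm_e : ∀ t : Tm, ¬ Subterm e t → 1 ≤ dct t
  | d, _ => le_rfl
  | e, he => absurd (Subterm.refl e) he
  | add a _, he =>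
    (one_le_dct_of_not_subterm_e a fun hs => he hs.addL).trans (Nat.le_add_right _ _)
  | app a _, he =>
    (one_le_dct_of_not_subterm_e a fun hs => he hs.appL).trans (Nat.le_add_right _ _)

theorem Root.subterm_e_of_rhs {t u : Tm} (h : Root t u) (hs : Subterm e u) : Subterm e t := by
  cases h with
  | addE x => exact hs.addL
  | eAdd x => exact hs.addR
  | assoc x y z =>
      rcases hs with _ | hs | hs
      · exact hs.addL.addL
      · rcases hs with _ | hs | hs
        · exact hs.addR.addL
        · exact hs.addR
  | appAdd x y z =>
      rcases hs with _ | _ | _ | hs | hs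
      · exact hs.addR.appL
      · rcases hs with _ | _ | _ | hs | hs
        · exact hs.addL.appL
        · exact hs.appR
  | appD x y =>
      rcases hs with _ | _ | _ | hs | hs
      · exact hs.appR.appL
      · rcases hs with _ | hs | hs
        · exact hs.appR
        · exact hs.appR.appL
  | appE x => exact hs.appR
  | dE => exact hs.appR

theorem Step.subterm_e_of_rhs {t u : Tm} (h : Step t u) (hs : Subterm e u) : Subterm e t := by
  induction h with
  | root hr => exact hr.subterm_e_of_rhs hs
  | addL _ ih =>
      rcases hs with _ | hs | hs
      · exact (ih hs).addL
      · exact hs.addR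
  | addR _ ih =>
      rcases hs with _ | hs | hs
      · exact hs.addL
      · exact (ih hs).addR
  | appL _ ih =>
      rcases hs with _ | _ | _ | hs | hs
      · exact (ih hs).appL
      · exact hs.appR
  | appR _ ih =>
      rcases hs with _ | _ | _ | hs | hs
      · exact hs.appL
      · exact (ih hs).appR

theorem Steps.not_subterm_e {t u : Tm} (h : Steps t u) (he : ¬ Subterm e t) : ¬ Subterm e u := by
  induction h with
  | refl => exact he
  | tail _ hstep ih => exact fun hs => ih (hstep.subterm_e_of_rhs hs)

theorem Root.dct_le {t u : Tm} (h : Root t u) (he : ¬ Subterm e t) : dct t ≤ dct u := by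
  cases h with
  | addE x | eAdd x => simp [dct]
  | assoc x y z | appAdd x y z => simp only [dct]; omega
  | appD x y =>
      have hx : 1 ≤ dct x := one_le_dct_of_not_subterm_e x fun hs => he hs.appR.appL
      simp only [dct]; omega
  | appE x => exact absurd (Subterm.refl e).appL he
  | dE => exact absurd (Subterm.refl e).appR he

theorem Step.dct_le {t u : Tm} (h : Step t u) (he : ¬ Subterm e t) : dct t ≤ dct u := by
  induction h with
  | root hr => exact hr.dct_le he
  | addL _ ih => simpa only [dct] using Nat.add_le_add_right (ih fun hs => he hs.addL) _
  | addR _ ih => simpa only [dct] using Nat.add_le_add_left (ih fun hs => he hs.addR) _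
  | appL _ ih => simpa only [dct] using Nat.add_le_add_right (ih fun hs => he hs.appL) _
  | appR _ ih => simpa only [dct] using Nat.add_le_add_left (ih fun hs => he hs.appR) _

theorem Steps.dct_le {t u : Tm} (h : Steps t u) (he : ¬ Subterm e t) : dct t ≤ dct u := by
  induction h with
  | refl => exact le_rfl
  | tail hsteps hstep ih => exact ih.trans (hstep.dct_le (Steps.not_subterm_e hsteps he))

/-- if e does not occur in t, then the d-count of the normal
form of t is at least the d-count of t. -/
theorem dct_nf_ge :
    ∀ t n : Tm, ¬ Subterm e t → Steps t n → NormalForm n → dct t ≤ dct n :=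
  fun _ _ he hsteps _ => hsteps.dct_le he
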